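/- Let $y : \mathbb{R} \to \mathbb{R}$ be a $C^2$ function defined on all of $\mathbb{R}$ satisfying $y''(r) \le -a e^{-2y(r)}$ for all $r$, where $a > 0$ is a constant. Then no such function exists; i.e., any solution of this differential inequality must fail to be defined for all $r \in \mathbb{R}$. -/

import Mathlib

/-!
Since `y'' < 0`, the derivative `y'` is strictly decreasing, so after replacing `y(r)` by `y(-r)` if
necessary it is negative from some `r₀` on. Then `y` decreases at least linearly, hence `y → -∞`, and
the energy `y'² - a e^{-2y}` is nondecreasing on `[r₀, ∞)`. As `e^{-2y} → ∞`, this eventually gives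
`y'² ≥ (a/2) e^{-2y}`, i.e. `(e^y)' ≤ -√(a/2)`, which forces the positive function `e^y` to `-∞`.
-/

open Real Set Filter

theorem tendsto_atBot_of_eventually_deriv_le_neg {f : ℝ → ℝ} (hf : Differentiable ℝ f) {c : ℝ}
    (hc : 0 < c) (hf' : ∀ᶠ r in atTop, deriv f r ≤ -c) : Tendsto f atTop atBot := by
  obtain ⟨r₀, hr₀⟩ := eventually_atTop.mp hf'
  have hline : Tendsto (fun r => (f r₀ + c * r₀) + -c * r) atTop atBot :=
    tendsto_atBot_add_const_left _ _ (tendsto_id.const_mul_atTop_of_neg (neg_lt_zero.mpr hc))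
  refine tendsto_atBot_mono' _ ?_ hline
  filter_upwards [eventually_ge_atTop r₀] with r hr
  have := (convex_Ici r₀).image_sub_le_mul_sub_of_deriv_le hf.continuous.continuousOn
    hf.differentiableOn (fun x hx => hr₀ x (interior_subset hx)) r₀ self_mem_Ici r hr hr
  linarith

theorem deriv_deriv_comp_neg (f : ℝ → ℝ) (r : ℝ) :
    deriv (deriv fun x => f (-x)) r = deriv (deriv f) (-r) := by
  rw [funext (deriv_comp_neg f), deriv.fun_neg, deriv_comp_neg, neg_neg]

noncomputable def energy (a : ℝ) (y : ℝ → ℝ) (r : ℝ) : ℝ :=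
  deriv y r ^ 2 - a * exp (-2 * y r)

namespace energy

variable {a : ℝ} {y : ℝ → ℝ}

theorem hasDerivAt (hy : Differentiable ℝ y) (hy' : Differentiable ℝ (deriv y)) (r : ℝ) :
    HasDerivAt (energy a y) (2 * deriv y r * (deriv (deriv y) r + a * exp (-2 * y r))) r :=
  (((hy' r).hasDerivAt.fun_pow 2).sub
    (((hy r).hasDerivAt.const_mul (-2)).exp.const_mul a)).congr_deriv (by push_cast; ring)

theorem monotoneOn (hy : Differentiable ℝ y) (hy' : Differentiable ℝ (deriv y))
    (h : ∀ r, deriv (deriv y) r ≤ -a * exp (-2 * y r)) {s : Set ℝ} (hs : Convex ℝ s)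
    (hneg : ∀ r ∈ s, deriv y r ≤ 0) : MonotoneOn (energy a y) s :=
  monotoneOn_of_hasDerivWithinAt_nonneg hs
    (fun r _ => (hasDerivAt hy hy' r).continuousAt.continuousWithinAt)
    (fun r _ => (hasDerivAt hy hy' r).hasDerivWithinAt)
    (fun r hr => mul_nonneg_of_nonpos_of_nonpos (by linarith [hneg r (interior_subset hr)])
      (by linarith [h r]))

end energy

section

variable {a : ℝ} (ha : 0 < a) {y : ℝ → ℝ} (hy : Differentiable ℝ y)
  (h : ∀ r, deriv (deriv y) r ≤ -a * exp (-2 * y r))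
include ha h

theorem deriv_deriv_neg_of_le (r : ℝ) : deriv (deriv y) r < 0 :=
  (h r).trans_lt (by nlinarith [exp_pos (-2 * y r)])

theorem strictAnti_deriv_of_le : StrictAnti (deriv y) :=
  strictAnti_of_deriv_neg (deriv_deriv_neg_of_le ha h)

include hy

theorem eventually_half_exp_le_sq_deriv {r₀ : ℝ} (hr₀ : deriv y r₀ < 0) :
    ∀ᶠ r in atTop, a / 2 * exp (-2 * y r) ≤ deriv y r ^ 2 := by
  have hy' : Differentiable ℝ (deriv y) := fun r =>
    differentiableAt_of_deriv_ne_zero (deriv_deriv_neg_of_le ha h r).ne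
  have hdecr : ∀ r ≥ r₀, deriv y r ≤ deriv y r₀ := fun r hr =>
    (strictAnti_deriv_of_le ha h).antitone hr
  have hy_bot : Tendsto y atTop atBot :=
    tendsto_atBot_of_eventually_deriv_le_neg hy (neg_pos.mpr hr₀)
      (by filter_upwards [eventually_ge_atTop r₀] with r hr; simpa using hdecr r hr)
  have hexp_top : Tendsto (fun r => exp (-2 * y r)) atTop atTop :=
    tendsto_exp_atTop.comp (hy_bot.const_mul_atBot_of_neg (by norm_num))
  filter_upwards [eventually_ge_atTop r₀, hexp_top.eventually_ge_atTop (2 * exp (-2 * y r₀))]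
    with r hr hexp
  have hE := energy.monotoneOn hy hy' h (convex_Ici r₀)
    (fun r hr => (hdecr r hr).trans hr₀.le) self_mem_Ici hr hr
  simp only [energy] at hE
  nlinarith [sq_nonneg (deriv y r₀)]

theorem eventually_deriv_exp_comp_le {r₀ : ℝ} (hr₀ : deriv y r₀ < 0) :
    ∀ᶠ r in atTop, deriv (fun r => exp (y r)) r ≤ -√(a / 2) := by
  filter_upwards [eventually_half_exp_le_sq_deriv ha hy h hr₀, eventually_ge_atTop r₀]
    with r hsq hr
  rw [(hy r).hasDerivAt.exp.deriv]
  have hneg : exp (y r) * deriv y r < 0 :=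
    mul_neg_of_pos_of_neg (exp_pos _) (((strictAnti_deriv_of_le ha h).antitone hr).trans_lt hr₀)
  have hsq' : a / 2 ≤ (exp (y r) * deriv y r) ^ 2 := by
    have : exp (y r) ^ 2 * exp (-2 * y r) = 1 := by
      rw [← exp_nat_mul, ← exp_add]; norm_num
    nlinarith [sq_nonneg (exp (y r))]
  have := sqrt_le_sqrt hsq'
  rw [sqrt_sq_eq_abs, abs_of_neg hneg] at this
  linarith

theorem false_of_deriv_neg {r₀ : ℝ} (hr₀ : deriv y r₀ < 0) : False := by
  have hc : 0 < √(a / 2) := sqrt_pos.mpr (by linarith)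
  have := tendsto_atBot_of_eventually_deriv_le_neg (fun r => (hy r).exp) hc
    (eventually_deriv_exp_comp_le ha hy h hr₀)
  obtain ⟨r, hr⟩ := (this.eventually (eventually_lt_atBot 0)).exists
  exact (exp_pos (y r)).not_gt hr

theorem false_of_deriv_pos {r₀ : ℝ} (hr₀ : 0 < deriv y r₀) : False :=
  false_of_deriv_neg ha (y := fun r => y (-r)) (hy.comp differentiable_neg)
    (fun r => (deriv_deriv_comp_neg y r).trans_le (h (-r)))
    (r₀ := -r₀) (by simpa [deriv_comp_neg] using hr₀)

end

/-- There is no globally defined `C²` function `y : ℝ → ℝ` satisfying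
`y'' ≤ -a e^{-2y}` for a constant `a > 0`. -/
theorem no_global_solution (a : ℝ) (ha : 0 < a) (y : ℝ → ℝ) (hy : ContDiff ℝ 2 y)
    (h : ∀ r : ℝ, deriv (deriv y) r ≤ -a * Real.exp (-2 * y r)) : False := by
  have hy₁ : Differentiable ℝ y := hy.differentiable two_ne_zero
  rcases lt_or_ge (deriv y 1) 0 with h₁ | h₁
  · exact false_of_deriv_neg ha hy₁ h h₁
  · exact false_of_deriv_pos ha hy₁ h (h₁.trans_lt (strictAnti_deriv_of_le ha h zero_lt_one))
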